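/- Let F ⊣ G be an adjunction between categories C and D admitting filtered colimits, where G : D → C preserves filtered colimits and is conservative. If C is compactly generated (generated under filtered colimits by a set of compact objects), then D is compactly generated, with generators the images under F of the compact generators of C. -/

import Mathlib

open CategoryTheory Limits

universe v u₁ u₂

/-- An object `X` is compact if `Hom(X, −)` commutes with filtered colimits. -/
def IsCompactObj {C : Type u₁} [Category.{v} C] (X : C) : Prop :=
  ∀ (J : Type v) (_ : SmallCategory J) (_ : IsFiltered J),
    Nonempty (PreservesColimitsOfShape J (coyoneda.obj (Opposite.op X)))

/-- A set of objects `S` generates `C`: a morphism is an isomorphism as soon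
as `Hom(s, −)` takes it to a bijection for every `s ∈ S`. -/
def IsGeneratingSet {C : Type u₁} [Category.{v} C] (S : Set C) : Prop :=
  ∀ (X Y : C) (f : X ⟶ Y),
    (∀ s ∈ S, Function.Bijective (fun g : s ⟶ X => g ≫ f)) → IsIso f

namespace CategoryTheory.Adjunction

variable {C : Type u₁} {D : Type u₂} [Category.{v} C] [Category.{v} D]
  {F : C ⥤ D} {G : D ⥤ C} (adj : F ⊣ G)

include adj in
/-- `Hom(F s, −) ≅ Hom(s, G −)`, so `Hom(F s, −)` is the composite of two functors
preserving filtered colimits. -/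
theorem isCompactObj_obj_of_preserves_filtered
    (hG : ∀ (J : Type v) (_ : SmallCategory J) (_ : IsFiltered J),
      Nonempty (PreservesColimitsOfShape J G))
    {s : C} (hs : IsCompactObj s) : IsCompactObj (F.obj s) := by
  intro J _ _
  obtain ⟨_⟩ := hG J _ ‹_›
  obtain ⟨_⟩ := hs J _ ‹_›
  exact ⟨preservesColimitsOfShape_of_natIso (adj.corepresentableBy s).toIso.symm⟩

include adj in
theorem bijective_comp_map_iff (s : C) {X Y : D} (f : X ⟶ Y) :
    Function.Bijective (fun g : s ⟶ G.obj X => g ≫ G.map f) ↔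
      Function.Bijective (fun g : F.obj s ⟶ X => g ≫ f) := by
  have hcomm : (fun g : s ⟶ G.obj X => g ≫ G.map f) =
      adj.homEquiv s Y ∘ (fun g : F.obj s ⟶ X => g ≫ f) ∘ (adj.homEquiv s X).symm := by
    funext g
    simp [homEquiv_naturality_right]
  rw [hcomm, Function.Bijective.of_comp_iff' (adj.homEquiv s Y).bijective,
    Function.Bijective.of_comp_iff _ (adj.homEquiv s X).symm.bijective]

include adj in
theorem isGeneratingSet_image_of_reflectsIsomorphisms [G.ReflectsIsomorphisms]
    {S : Set C} (hS : IsGeneratingSet S) : IsGeneratingSet (F.obj '' S) := by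
  intro X Y f hf
  have : IsIso (G.map f) := hS _ _ _ fun s hs =>
    (adj.bijective_comp_map_iff s f).2 (hf _ ⟨s, hs, rfl⟩)
  exact isIso_of_reflects_iso f G

end CategoryTheory.Adjunction

theorem stmt14_general {C : Type u₁} {D : Type u₂} [Category.{v} C] [Category.{v} D]
    (F : C ⥤ D) (G : D ⥤ C) (adj : F ⊣ G)
    (hGcont : ∀ (J : Type v) (_ : SmallCategory J) (_ : IsFiltered J),
      Nonempty (PreservesColimitsOfShape J G))
    [G.ReflectsIsomorphisms]
    (S : Set C) (hcpt : ∀ s ∈ S, IsCompactObj s) (hgen : IsGeneratingSet S) :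
    (∀ s ∈ S, IsCompactObj (F.obj s)) ∧ IsGeneratingSet (F.obj '' S) :=
  ⟨fun s hs => adj.isCompactObj_obj_of_preserves_filtered hGcont (hcpt s hs),
    adj.isGeneratingSet_image_of_reflectsIsomorphisms hgen⟩

/-- If `F ⊣ G` with `G` preserving filtered colimits and conservative, and `C`
is compactly generated by a set `S` of compact objects, then `D` is compactly
generated by the image of `S` under `F`. -/
theorem stmt14 {C : Type u₁} {D : Type u₂} [Category.{v} C] [Category.{v} D]
    [HasFilteredColimits C] [HasFilteredColimits D]
    (F : C ⥤ D) (G : D ⥤ C) (adj : F ⊣ G)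
    (hGcont : ∀ (J : Type v) (_ : SmallCategory J) (_ : IsFiltered J),
      Nonempty (PreservesColimitsOfShape J G))
    [G.ReflectsIsomorphisms]
    (S : Set C) (hcpt : ∀ s ∈ S, IsCompactObj s) (hgen : IsGeneratingSet S) :
    (∀ s ∈ S, IsCompactObj (F.obj s)) ∧ IsGeneratingSet (F.obj '' S) :=
  stmt14_general F G adj hGcont S hcpt hgen
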